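/- For any positive integer n, the operator ∂ₙ sending a finite set J of integers to the symmetric difference J Δ (J - n) is injective on the collection of finite subsets of ℤ, and its image is exactly the set of finite subsets K of ℤ such that for each residue i with 0 ≤ i ≤ n-1, the set {j ∈ ℤ : nj + i ∈ K} has even cardinality. -/

import Mathlib

/-!
Inside a residue class mod `n`, `∂ₙ J` is the symmetric difference of two translates of the same
finite set, hence has even size. Conversely, the parity of `#{k ∈ K | x ≤ k, k ≡ x (mod n)}`
changes between `x` and `x + n` exactly when `x ∈ K`, so the set of `x` where it is odd is a
preimage of `K`; it is finite because that count is `0` above `K` and is the (even) size of a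
residue class of `K` below it. Injectivity: `J` and `J'` differ at the top of `J Δ J'` but not
`n` steps above it.
-/

/-- The boundary operator `∂ₙ J = J Δ (J - n)` on finite subsets of `ℤ`. -/
def intBd (n : ℤ) (J : Finset ℤ) : Finset ℤ := symmDiff J (J.image (· - n))

open Finset Function
open scoped symmDiff

theorem Finset.filter_symmDiff {α : Type*} [DecidableEq α] (p : α → Prop) [DecidablePred p]
    (s t : Finset α) : (s ∆ t).filter p = s.filter p ∆ t.filter p := by
  ext x
  simp only [mem_filter, mem_symmDiff]
  tauto

theorem Finset.even_card_symmDiff_of_card_eq {α : Type*} [DecidableEq α] {s t : Finset α}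
    (h : #s = #t) : Even #(s ∆ t) := by
  have hs := card_sdiff_add_card_inter s t
  have ht := card_sdiff_add_card_inter t s
  rw [inter_comm] at ht
  rw [Finset.symmDiff_def, card_union_of_disjoint disjoint_sdiff_sdiff, Nat.even_iff]
  omega

theorem Int.eq_of_modEq_of_le_of_lt {n k x : ℤ} (h : k ≡ x [ZMOD n]) (hxk : x ≤ k)
    (hkx : k < x + n) : k = x := by
  have := Int.eq_zero_of_dvd_of_nonneg_of_lt (sub_nonneg.2 hxk) (by omega)
    (Int.ModEq.dvd h.symm)
  omega

theorem mem_intBd {n x : ℤ} {J : Finset ℤ} : x ∈ intBd n J ↔ ¬(x ∈ J ↔ x + n ∈ J) := by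
  have : x ∈ J.image (· - n) ↔ x + n ∈ J := by
    simp only [mem_image, sub_eq_iff_eq_add, exists_eq_right]
  rw [intBd, mem_symmDiff, this]
  tauto

theorem intBd_injective {n : ℤ} (hn : 0 < n) : Injective (intBd n) := by
  intro J J' h
  by_contra hne
  have hD : (J ∆ J').Nonempty := symmDiff_nonempty.2 hne
  set m := (J ∆ J').max' hD
  have hm : m ∈ J ∆ J' := max'_mem _ _
  have hmn : m + n ∉ J ∆ J' := fun hc => absurd (le_max' _ _ hc) (by omega)
  have hbd := congrArg (m ∈ ·) h
  simp only [mem_intBd, eq_iff_iff] at hbd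
  rw [mem_symmDiff] at hm hmn
  tauto

theorem even_card_filter_intBd {n : ℤ} {p : ℤ → Prop} [DecidablePred p]
    (hp : ∀ x, p (x - n) ↔ p x) (J : Finset ℤ) : Even #((intBd n J).filter p) := by
  rw [intBd, filter_symmDiff, filter_image, filter_congr fun x _ => hp x]
  exact even_card_symmDiff_of_card_eq (card_image_of_injective _ sub_left_injective).symm

def tailCount (n : ℤ) (K : Finset ℤ) (x : ℤ) : ℕ := #{k ∈ K | x ≤ k ∧ k ≡ x [ZMOD n]}

section tailCount

variable {n : ℤ} {K : Finset ℤ} {x : ℤ}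

theorem tailCount_eq_add (hn : 0 < n) :
    tailCount n K x = tailCount n K (x + n) + if x ∈ K then 1 else 0 := by
  have hsplit : {k ∈ K | x ≤ k ∧ k ≡ x [ZMOD n]} =
      {k ∈ K | x + n ≤ k ∧ k ≡ x + n [ZMOD n]} ∪ {k ∈ K | k = x} := by
    rw [← filter_or]
    refine filter_congr fun k _ => ?_
    have hmod : k ≡ x + n [ZMOD n] ↔ k ≡ x [ZMOD n] :=
      ⟨fun h => h.trans Int.add_modEq_right, fun h => h.trans Int.add_modEq_right.symm⟩
    rw [hmod]
    constructor
    · rintro ⟨hxk, hk⟩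
      by_cases hkx : k < x + n
      · exact Or.inr (Int.eq_of_modEq_of_le_of_lt hk hxk hkx)
      · exact Or.inl ⟨by omega, hk⟩
    · rintro (⟨hxk, hk⟩ | rfl)
      · exact ⟨by omega, hk⟩
      · exact ⟨le_rfl, Int.ModEq.refl k⟩
  have hdisj : Disjoint {k ∈ K | x + n ≤ k ∧ k ≡ x + n [ZMOD n]} {k ∈ K | k = x} :=
    disjoint_filter.2 fun k _ hk hkx => by omega
  rw [tailCount, hsplit, card_union_of_disjoint hdisj, filter_eq', apply_ite card, card_singleton,
    card_empty]
  rfl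

theorem tailCount_eq_card_of_forall_le (h : ∀ k ∈ K, x ≤ k) :
    tailCount n K x = #{k ∈ K | k ≡ x [ZMOD n]} := by
  rw [tailCount]
  congr 1
  exact filter_congr fun k hk => and_iff_right (h k hk)

theorem tailCount_eq_zero_of_forall_lt (h : ∀ k ∈ K, k < x) : tailCount n K x = 0 := by
  rw [tailCount, card_eq_zero, filter_eq_empty_iff]
  exact fun k hk ⟨hxk, _⟩ => absurd (h k hk) (not_lt.2 hxk)

end tailCount

theorem exists_intBd_eq {n : ℤ} (hn : 0 < n) {K : Finset ℤ}
    (hK : ∀ x, Even #{k ∈ K | k ≡ x [ZMOD n]}) : ∃ J, intBd n J = K := by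
  obtain ⟨lo, hlo⟩ := K.bddBelow
  obtain ⟨hi, hhi⟩ := K.bddAbove
  have hbound : ∀ x, Odd (tailCount n K x) → x ∈ Icc lo hi := by
    intro x hx
    rw [mem_Icc]
    by_contra hout
    rcases not_and_or.1 hout with hlt | hgt
    · rw [tailCount_eq_card_of_forall_le fun k hk => (not_le.1 hlt).le.trans (hlo hk)] at hx
      exact Nat.not_odd_iff_even.2 (hK x) hx
    · rw [tailCount_eq_zero_of_forall_lt fun k hk => (hhi hk).trans_lt (not_le.1 hgt)] at hx
      exact Nat.not_odd_zero hx
  set J := {x ∈ Icc lo hi | Odd (tailCount n K x)}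
  have hJ : ∀ x, x ∈ J ↔ Odd (tailCount n K x) := fun x =>
    ⟨fun h => (mem_filter.1 h).2, fun h => mem_filter.2 ⟨hbound x h, h⟩⟩
  refine ⟨J, ext fun x => ?_⟩
  rw [mem_intBd, hJ, hJ, tailCount_eq_add hn]
  by_cases hx : x ∈ K <;> simp [hx, Nat.odd_add_one, -Nat.not_odd_iff_even]

theorem stmt_0 (n : ℤ) (hn : 0 < n) :
    Function.Injective (intBd n) ∧
    Set.range (intBd n) =
      {K : Finset ℤ | ∀ i : ℤ, 0 ≤ i → i ≤ n - 1 →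
        Even ((K.filter (fun m => m % n = i)).card)} := by
  refine ⟨intBd_injective hn, Set.ext fun K => ⟨?_, fun hK => exists_intBd_eq hn fun x => ?_⟩⟩
  · rintro ⟨J, rfl⟩ i - -
    exact even_card_filter_intBd (fun x => by rw [Int.sub_emod_right]) J
  · exact hK (x % n) (Int.emod_nonneg x hn.ne') (by linarith [Int.emod_lt_of_pos x hn])
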